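/- arXiv:1701.08491 — 6 statements merged into one kernel-verified Lean document; each statement's English description precedes it below -/
import Mathlib

section
/- For ℓ ∈ (0, 2·arsinh(1)] and any s₁, s₂ with |s₁|, |s₂| < X(ℓ), the collar conformal factor satisfies ρ_ℓ(s₁) ≤ e^{|s₁ − s₂|} ρ_ℓ(s₂). -/
open Real

/-- Conformal factor of the hyperbolic collar around a geodesic of length `ℓ`. -/
noncomputable def rho (ℓ s : ℝ) : ℝ := ℓ / (2 * π * Real.cos (ℓ * s / (2 * π)))

/-- Half-length of the hyperbolic collar in collar coordinates. -/
noncomputable def Xcol (ℓ : ℝ) : ℝ :=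
  (2 * π / ℓ) * (π / 2 - Real.arctan (Real.sinh (ℓ / 2)))

/-- For `ℓ ∈ (0, 2 arsinh 1]` and `|s₁|, |s₂| < X(ℓ)`, the collar conformal factor
satisfies `ρ_ℓ(s₁) ≤ e^{|s₁ − s₂|} ρ_ℓ(s₂)`. -/
theorem collar_rho_comparable (ℓ s₁ s₂ : ℝ) (hℓ : 0 < ℓ) (hℓ' : ℓ ≤ 2 * Real.arsinh 1)
    (h1 : |s₁| < Xcol ℓ) (h2 : |s₂| < Xcol ℓ) :
    rho ℓ s₁ ≤ Real.exp |s₁ - s₂| * rho ℓ s₂ := by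
  have hπ := Real.pi_pos
  set c : ℝ := ℓ / (2 * π) with hc
  have hcpos : 0 < c := by positivity
  set X' : ℝ := π / 2 - Real.arctan (Real.sinh (ℓ / 2)) with hX'
  clear_value c X'
  have hX'le : X' ≤ π / 2 := by
    have h0 : Real.arctan 0 ≤ Real.arctan (Real.sinh (ℓ / 2)) :=
      Real.arctan_strictMono.monotone (le_of_lt (Real.sinh_pos_iff.2 (by linarith)))
    rw [Real.arctan_zero] at h0
    simp only [hX']; linarith
  have hX'pi : X' ≤ π := by linarith
  -- sin (arctan (sinh t)) = tanh t
  have htanh : Real.cos X' = Real.sinh (ℓ / 2) / Real.cosh (ℓ / 2) := by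
    rw [hX', Real.cos_pi_div_two_sub, Real.sin_arctan]
    congr 1
    rw [← Real.cosh_arsinh, Real.arsinh_sinh]
  -- tanh (ℓ/2) ≥ c
  have hsinh : ℓ / 2 ≤ Real.sinh (ℓ / 2) := Real.self_le_sinh_iff.2 (by linarith)
  have hcosh : Real.cosh (ℓ / 2) ≤ Real.sqrt 2 := by
    have h1 : ℓ / 2 ≤ Real.arsinh 1 := by linarith
    have harsnn : 0 ≤ Real.arsinh 1 := by linarith
    have hle : Real.cosh (ℓ / 2) ≤ Real.cosh (Real.arsinh 1) := by
      rw [Real.cosh_le_cosh, abs_of_nonneg (by linarith), abs_of_nonneg harsnn]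
      exact h1
    calc Real.cosh (ℓ / 2) ≤ Real.cosh (Real.arsinh 1) := hle
      _ = Real.sqrt 2 := by rw [Real.cosh_arsinh]; norm_num
  have hcoshpos : 0 < Real.cosh (ℓ / 2) := Real.cosh_pos _
  have hsqrt2 : Real.sqrt 2 ≤ π := by
    have h2 : Real.sqrt 2 ≤ 2 := by
      nlinarith [Real.sq_sqrt (by norm_num : (0:ℝ) ≤ 2), Real.sqrt_nonneg 2]
    linarith [Real.pi_gt_three]
  have hkey : c ≤ Real.cos X' := by
    rw [htanh, hc, div_le_div_iff₀ (by positivity) hcoshpos]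
    calc ℓ * Real.cosh (ℓ / 2) ≤ ℓ * Real.sqrt 2 := by nlinarith
      _ ≤ ℓ * π := by nlinarith
      _ ≤ 2 * π * Real.sinh (ℓ / 2) := by nlinarith [Real.pi_pos]
      _ = Real.sinh (ℓ / 2) * (2 * π) := by ring
  have hcX'pos : 0 < Real.cos X' := lt_of_lt_of_le hcpos hkey
  -- cos bounds at u_i := c * s_i
  have hcosbound : ∀ s : ℝ, |s| < Xcol ℓ → Real.cos X' ≤ Real.cos (ℓ * s / (2 * π)) := by
    intro s hs
    have hXcol : Xcol ℓ = X' / c := by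
      rw [Xcol, hX', hc]; field_simp
    have habs : |ℓ * s / (2 * π)| < X' := by
      have : |ℓ * s / (2 * π)| = c * |s| := by
        rw [hc, abs_div, abs_mul, abs_of_pos hℓ, abs_of_pos (by positivity : (0:ℝ) < 2 * π)]
        ring
      rw [this]
      calc c * |s| < c * (X' / c) := by
            apply mul_lt_mul_of_pos_left _ hcpos
            rwa [hXcol] at hs
        _ = X' := by field_simp
    have h := Real.cos_le_cos_of_nonneg_of_le_pi (abs_nonneg (ℓ * s / (2 * π)))
      hX'pi habs.le
    rwa [Real.cos_abs] at h
  have hc1 := hcosbound s₁ h1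
  have hc2 := hcosbound s₂ h2
  have hcos1pos : 0 < Real.cos (ℓ * s₁ / (2 * π)) := lt_of_lt_of_le hcX'pos hc1
  have hcos2pos : 0 < Real.cos (ℓ * s₂ / (2 * π)) := lt_of_lt_of_le hcX'pos hc2
  set d : ℝ := |s₁ - s₂| with hd
  have hdnn : 0 ≤ d := abs_nonneg _
  -- Lipschitz: cos u₂ ≤ cos u₁ + c * d
  have hlip : Real.cos (ℓ * s₂ / (2 * π)) ≤ Real.cos (ℓ * s₁ / (2 * π)) + c * d := by
    have h := Real.cos_sub_cos (ℓ * s₂ / (2 * π)) (ℓ * s₁ / (2 * π))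
    have habs : |Real.cos (ℓ * s₂ / (2 * π)) - Real.cos (ℓ * s₁ / (2 * π))|
        ≤ |ℓ * s₂ / (2 * π) - ℓ * s₁ / (2 * π)| := by
      rw [h, abs_mul, abs_mul]
      calc |(-2 : ℝ)| * |Real.sin ((ℓ * s₂ / (2 * π) + ℓ * s₁ / (2 * π)) / 2)|
            * |Real.sin ((ℓ * s₂ / (2 * π) - ℓ * s₁ / (2 * π)) / 2)|
          ≤ 2 * 1 * |(ℓ * s₂ / (2 * π) - ℓ * s₁ / (2 * π)) / 2| := by
            apply mul_le_mul _ (Real.abs_sin_le_abs) (abs_nonneg _) (by positivity)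
            rw [abs_neg, abs_two]
            have : |Real.sin ((ℓ * s₂ / (2 * π) + ℓ * s₁ / (2 * π)) / 2)| ≤ 1 :=
              abs_le.2 ⟨Real.neg_one_le_sin _, Real.sin_le_one _⟩
            nlinarith
        _ = |ℓ * s₂ / (2 * π) - ℓ * s₁ / (2 * π)| := by
            rw [abs_div, abs_two]; ring
    have heq : |ℓ * s₂ / (2 * π) - ℓ * s₁ / (2 * π)| = c * d := by
      rw [show ℓ * s₂ / (2 * π) - ℓ * s₁ / (2 * π) = c * (s₂ - s₁) by rw [hc]; ring]
      rw [abs_mul, abs_of_pos hcpos, hd, abs_sub_comm]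
    have := (abs_le.1 habs).2
    rw [heq] at this
    linarith [(sub_le_iff_le_add.1 this)]
  -- cos u₂ ≤ exp d * cos u₁
  have hmain : Real.cos (ℓ * s₂ / (2 * π)) ≤ Real.exp d * Real.cos (ℓ * s₁ / (2 * π)) := by
    have h1d : 1 + d ≤ Real.exp d := Real.add_one_le_exp d |>.trans_eq' (by ring)
    calc Real.cos (ℓ * s₂ / (2 * π)) ≤ Real.cos (ℓ * s₁ / (2 * π)) + c * d := hlip
      _ ≤ Real.cos (ℓ * s₁ / (2 * π)) + Real.cos (ℓ * s₁ / (2 * π)) * d := by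
          nlinarith [hkey.trans hc1]
      _ = (1 + d) * Real.cos (ℓ * s₁ / (2 * π)) := by ring
      _ ≤ Real.exp d * Real.cos (ℓ * s₁ / (2 * π)) := by
          exact mul_le_mul_of_nonneg_right h1d hcos1pos.le
  -- conclude
  rw [rho, rho]
  rw [div_le_iff₀ (by positivity)]
  have hexp : 0 < Real.exp d := Real.exp_pos d
  rw [show Real.exp |s₁ - s₂| * (ℓ / (2 * π * Real.cos (ℓ * s₂ / (2 * π)))) * (2 * π * Real.cos (ℓ * s₁ / (2 * π))) = ℓ * (Real.exp d * Real.cos (ℓ * s₁ / (2 * π))) / Real.cos (ℓ * s₂ / (2 * π)) by rw [← hd]; field_simp]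
  rw [le_div_iff₀ hcos2pos]
  nlinarith
end

section
/- For the collar metric g = ρ_ℓ(s)²(ds²+dθ²) on C = (−X(ℓ),X(ℓ)) × S¹, the L² norm of dz² satisfies ‖dz²‖²_{L²(C,g)} = ∫_C |dz²|_g² dv_g = 4 ∫_{−X(ℓ)}^{X(ℓ)} ∫_{S¹} ρ_ℓ(s)^{−2} dθ ds, and there exist a universal constant C₀ such that ‖dz²‖²_{L²(C,g)} ≤ C₀ ℓ^{−3} for all ℓ ∈ (0, 2 arsinh(1)); moreover for every L̄ > 0 there is c₁ = c₁(L̄) > 0 with ‖dz²‖_{L²(C,g)} ≥ c₁ whenever ℓ ≤ L̄. -/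
open Real

/-- The squared `L²` norm of `dz²` on the collar: `∫_C |dz²|_g² dv_g`. -/
noncomputable def dz2L2sq (ℓ : ℝ) : ℝ :=
  ∫ s in (-Xcol ℓ)..(Xcol ℓ), ∫ _θ in (0:ℝ)..(2 * π),
    (2 * ((rho ℓ s) ^ 2)⁻¹) ^ 2 * (rho ℓ s) ^ 2

lemma collar_key (ℓ s : ℝ) :
    (2 * ((rho ℓ s) ^ 2)⁻¹) ^ 2 * (rho ℓ s) ^ 2 = 4 * ((rho ℓ s) ^ 2)⁻¹ := by
  rcases eq_or_ne (rho ℓ s) 0 with h | h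
  · simp [h]
  · field_simp
    ring

lemma collar_repr (ℓ : ℝ) : dz2L2sq ℓ
    = ∫ s in (-Xcol ℓ)..(Xcol ℓ), 32 * π ^ 3 * (Real.cos (ℓ * s / (2 * π))) ^ 2 / ℓ ^ 2 := by
  unfold dz2L2sq
  refine intervalIntegral.integral_congr fun s _ => ?_
  rw [collar_key, intervalIntegral.integral_const]
  simp only [rho, div_pow, inv_div, smul_eq_mul, sub_zero]
  ring

lemma collar_cont (ℓ : ℝ) :
    Continuous fun s : ℝ => 32 * π ^ 3 * (Real.cos (ℓ * s / (2 * π))) ^ 2 / ℓ ^ 2 := by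
  fun_prop

lemma collar_cos_X (ℓ : ℝ) :
    Real.cos (π / 2 - Real.arctan (Real.sinh (ℓ / 2))) = Real.tanh (ℓ / 2) := by
  rw [Real.cos_pi_div_two_sub, Real.sin_arctan, Real.tanh_eq_sinh_div_cosh]
  congr 1
  rw [show (1 : ℝ) + Real.sinh (ℓ / 2) ^ 2 = Real.cosh (ℓ / 2) ^ 2 by
    rw [Real.cosh_sq]; ring, Real.sqrt_sq (Real.cosh_pos _).le]

/-- For the collar metric `g = ρ_ℓ(s)²(ds²+dθ²)` on `C = (−X(ℓ),X(ℓ)) × S¹`, the `L²` norm of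
`dz²` satisfies `‖dz²‖²_{L²(C,g)} = 4 ∫∫ ρ_ℓ(s)^{−2} dθ ds`; there is a universal constant
`C₀` with `‖dz²‖²_{L²} ≤ C₀ ℓ^{−3}` for all `ℓ ∈ (0, 2 arsinh 1)`; and for every `L̄ > 0`
there is `c₁ = c₁(L̄) > 0` with `‖dz²‖_{L²} ≥ c₁` whenever `0 < ℓ ≤ L̄`. -/
theorem collar_dz2_L2_bounds :
    (∀ ℓ : ℝ, 0 < ℓ →
      dz2L2sq ℓ = 4 * ∫ s in (-Xcol ℓ)..(Xcol ℓ), ∫ _θ in (0:ℝ)..(2 * π),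
        ((rho ℓ s) ^ 2)⁻¹) ∧
    (∃ C₀ : ℝ, 0 < C₀ ∧ ∀ ℓ : ℝ, 0 < ℓ → ℓ < 2 * Real.arsinh 1 →
      dz2L2sq ℓ ≤ C₀ * (ℓ ^ 3)⁻¹) ∧
    (∀ Lbar : ℝ, 0 < Lbar → ∃ c₁ : ℝ, 0 < c₁ ∧ ∀ ℓ : ℝ, 0 < ℓ → ℓ ≤ Lbar →
      c₁ ≤ Real.sqrt (dz2L2sq ℓ)) := by
  have hπ : (0:ℝ) < π := Real.pi_pos
  refine ⟨?_, ?_, ?_⟩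
  · -- part 1
    intro ℓ _
    unfold dz2L2sq
    simp_rw [collar_key, intervalIntegral.integral_const_mul]
  · -- part 2
    refine ⟨64 * π ^ 5, by positivity, ?_⟩
    intro ℓ hℓ _
    have hXnn : 0 ≤ Xcol ℓ := by
      have h1 := Real.arctan_lt_pi_div_two (Real.sinh (ℓ / 2))
      have : (0:ℝ) < 2 * π / ℓ := by positivity
      unfold Xcol
      nlinarith
    have harctan_nn : 0 ≤ Real.arctan (Real.sinh (ℓ / 2)) := by
      have := Real.arctan_strictMono.monotone (le_of_lt (Real.sinh_pos_iff.2 (by linarith) :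
        (0:ℝ) < Real.sinh (ℓ / 2)))
      simpa using this
    have hX_le : Xcol ℓ ≤ π ^ 2 / ℓ := by
      unfold Xcol
      have h2 : π / 2 - Real.arctan (Real.sinh (ℓ / 2)) ≤ π / 2 := by linarith
      have h3 : (0:ℝ) < 2 * π / ℓ := by positivity
      calc (2 * π / ℓ) * (π / 2 - Real.arctan (Real.sinh (ℓ / 2)))
          ≤ (2 * π / ℓ) * (π / 2) := by
            exact mul_le_mul_of_nonneg_left h2 h3.le
        _ = π ^ 2 / ℓ := by field_simp
    rw [collar_repr]
    have hnorm : ‖∫ s in (-Xcol ℓ)..(Xcol ℓ),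
        32 * π ^ 3 * (Real.cos (ℓ * s / (2 * π))) ^ 2 / ℓ ^ 2‖
        ≤ (32 * π ^ 3 / ℓ ^ 2) * |Xcol ℓ - -Xcol ℓ| := by
      apply intervalIntegral.norm_integral_le_of_norm_le_const
      intro x _
      rw [Real.norm_eq_abs, abs_of_nonneg (by positivity)]
      apply div_le_div_of_nonneg_right ?_ (by positivity : (0:ℝ) ≤ ℓ ^ 2)
      nlinarith [Real.cos_sq_le_one (ℓ * x / (2 * π)), pow_pos Real.pi_pos 3]
    have habs : |Xcol ℓ - -Xcol ℓ| = 2 * Xcol ℓ := by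
      rw [sub_neg_eq_add, abs_of_nonneg (by linarith)]; ring
    calc (∫ s in (-Xcol ℓ)..(Xcol ℓ), 32 * π ^ 3 * (Real.cos (ℓ * s / (2 * π))) ^ 2 / ℓ ^ 2)
        ≤ ‖∫ s in (-Xcol ℓ)..(Xcol ℓ), 32 * π ^ 3 * (Real.cos (ℓ * s / (2 * π))) ^ 2 / ℓ ^ 2‖ :=
          le_abs_self _
      _ ≤ (32 * π ^ 3 / ℓ ^ 2) * (2 * Xcol ℓ) := by rw [← habs]; exact hnorm
      _ ≤ (32 * π ^ 3 / ℓ ^ 2) * (2 * (π ^ 2 / ℓ)) := by gcongr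
      _ = 64 * π ^ 5 * (ℓ ^ 3)⁻¹ := by field_simp; ring
  · -- part 3
    intro Lbar hL
    set C := Real.cosh (Lbar / 2) with hC
    have hCpos : 0 < C := Real.cosh_pos _
    set B := π / 2 - Real.arctan (Real.sinh (Lbar / 2)) with hBdef
    have hBpos : 0 < B := sub_pos.2 (Real.arctan_lt_pi_div_two _)
    refine ⟨Real.sqrt (32 * π ^ 4 * B / (Lbar * C ^ 2)), Real.sqrt_pos.2 (by positivity), ?_⟩
    intro ℓ hℓ hle
    apply Real.sqrt_le_sqrt
    rw [collar_repr]
    set X := Xcol ℓ with hXdef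
    set φ := π / 2 - Real.arctan (Real.sinh (ℓ / 2)) with hφdef
    have hφpos : 0 < φ := sub_pos.2 (Real.arctan_lt_pi_div_two _)
    have hφle : φ ≤ π / 2 := by
      have : 0 ≤ Real.arctan (Real.sinh (ℓ / 2)) := by
        have := Real.arctan_strictMono.monotone (le_of_lt (Real.sinh_pos_iff.2 (by linarith) :
          (0:ℝ) < Real.sinh (ℓ / 2)))
        simpa using this
      rw [hφdef]; linarith
    have hXpos : 0 < X := by
      rw [hXdef]; unfold Xcol
      exact mul_pos (by positivity) hφpos
    have hXφ : ℓ * X / (2 * π) = φ := by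
      rw [hXdef]; unfold Xcol
      field_simp
      ring
    have htanh_pos : 0 < Real.tanh (ℓ / 2) := by
      rw [Real.tanh_eq_sinh_div_cosh]
      exact div_pos (Real.sinh_pos_iff.2 (by linarith)) (Real.cosh_pos _)
    -- pointwise lower bound on the integrand
    have hpt : ∀ s ∈ Set.Icc (-X) X,
        32 * π ^ 3 * (Real.tanh (ℓ / 2)) ^ 2 / ℓ ^ 2
          ≤ 32 * π ^ 3 * (Real.cos (ℓ * s / (2 * π))) ^ 2 / ℓ ^ 2 := by
      intro s hs
      have habs_s : |s| ≤ X := abs_le.2 ⟨hs.1, hs.2⟩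
      have hu : |ℓ * s / (2 * π)| ≤ φ := by
        rw [← hXφ, abs_div, abs_of_nonneg (by positivity : (0:ℝ) ≤ 2 * π), abs_mul,
          abs_of_nonneg hℓ.le]
        gcongr
      have hφπ : φ ≤ π := hφle.trans (by linarith)
      have hcos : Real.cos φ ≤ Real.cos (ℓ * s / (2 * π)) := by
        rw [← Real.cos_abs (ℓ * s / (2 * π))]
        exact Real.cos_le_cos_of_nonneg_of_le_pi (abs_nonneg _) hφπ hu
      rw [hφdef, collar_cos_X] at hcos
      have : (Real.tanh (ℓ / 2)) ^ 2 ≤ (Real.cos (ℓ * s / (2 * π))) ^ 2 := by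
        nlinarith
      gcongr
    have hmono : (∫ _s in (-X)..X, 32 * π ^ 3 * (Real.tanh (ℓ / 2)) ^ 2 / ℓ ^ 2)
        ≤ ∫ s in (-X)..X, 32 * π ^ 3 * (Real.cos (ℓ * s / (2 * π))) ^ 2 / ℓ ^ 2 :=
      intervalIntegral.integral_mono_on (by linarith) intervalIntegrable_const
        ((collar_cont ℓ).intervalIntegrable _ _) hpt
    rw [intervalIntegral.integral_const, smul_eq_mul] at hmono
    -- lower bounds for the constant part
    have htanh_ge : ℓ / (2 * C) ≤ Real.tanh (ℓ / 2) := by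
      rw [Real.tanh_eq_sinh_div_cosh]
      have h1 : ℓ / 2 ≤ Real.sinh (ℓ / 2) := Real.self_le_sinh_iff.2 (by linarith)
      have h2 : Real.cosh (ℓ / 2) ≤ C := by
        rw [hC, Real.cosh_le_cosh, abs_of_nonneg (by linarith), abs_of_nonneg (by linarith)]
        linarith
      calc ℓ / (2 * C) = (ℓ / 2) / C := by ring
        _ ≤ Real.sinh (ℓ / 2) / Real.cosh (ℓ / 2) :=
          div_le_div₀ (by nlinarith [Real.sinh_pos_iff.2 (show (0:ℝ) < ℓ/2 by linarith)])
            h1 (Real.cosh_pos _) h2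
    have hm_ge : 8 * π ^ 3 / C ^ 2 ≤ 32 * π ^ 3 * (Real.tanh (ℓ / 2)) ^ 2 / ℓ ^ 2 := by
      have h2 : (ℓ / (2 * C)) ^ 2 ≤ (Real.tanh (ℓ / 2)) ^ 2 :=
        pow_le_pow_left₀ (by positivity) htanh_ge 2
      calc 8 * π ^ 3 / C ^ 2 = 32 * π ^ 3 * (ℓ / (2 * C)) ^ 2 / ℓ ^ 2 := by
            field_simp; ring
        _ ≤ 32 * π ^ 3 * (Real.tanh (ℓ / 2)) ^ 2 / ℓ ^ 2 := by gcongr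
    have hB_le_φ : B ≤ φ := by
      rw [hBdef, hφdef]
      have := Real.arctan_strictMono.monotone (Real.sinh_le_sinh.2 (by linarith : ℓ/2 ≤ Lbar/2))
      linarith
    have hX_ge : 2 * π / ℓ * B ≤ X := by
      rw [hXdef]; unfold Xcol
      have : (0:ℝ) < 2 * π / ℓ := by positivity
      rw [← hφdef]
      exact mul_le_mul_of_nonneg_left hB_le_φ this.le
    have hfinal : 32 * π ^ 4 * B / (Lbar * C ^ 2)
        ≤ (X - -X) * (32 * π ^ 3 * (Real.tanh (ℓ / 2)) ^ 2 / ℓ ^ 2) := by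
      have h2X : 2 * (2 * π / ℓ * B) ≤ X - -X := by linarith
      calc 32 * π ^ 4 * B / (Lbar * C ^ 2)
          ≤ 32 * π ^ 4 * B / (ℓ * C ^ 2) := by gcongr
        _ = (2 * (2 * π / ℓ * B)) * (8 * π ^ 3 / C ^ 2) := by field_simp; ring
        _ ≤ (X - -X) * (32 * π ^ 3 * (Real.tanh (ℓ / 2)) ^ 2 / ℓ ^ 2) := by
            apply mul_le_mul h2X hm_ge (by positivity) (by linarith)
      
    linarith
end

section
/- Let h : [−Y₋, Y₊] → ℝ be continuous and nonnegative, and let ϑ : [−Y₋, Y₊] → ℝ be a C² function satisfying ϑ″(s) − ϑ(s) ≥ −h(s) on (−Y₋, Y₊). Suppose A₊, A₋ ≥ 0 satisfy ϑ(Y₊) ≤ A₊ and ϑ(−Y₋) ≤ A₋. Then for all s ∈ [−Y₋, Y₊], ϑ(s) ≤ A₊ e^{s−Y₊} + A₋ e^{−s−Y₋} + ½ ∫_{−Y₋}^{Y₊} e^{−|s−q|} h(q) dq. -/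
/-!
The right-hand side `F` solves `F'' - F = -h` (the kernel `½e^{-|s-q|}` is the Green's function
of `1 - d²/ds²` on `ℝ`), and `F ≥ A₊, A₋` at the endpoints because `h ≥ 0`. Hence `w = ϑ - F`
satisfies `w'' ≥ w` inside and `w ≤ 0` at the endpoints. If `w` had a positive maximum, it would be
attained inside, where the second-order condition `w'' ≤ 0` contradicts `w'' ≥ w > 0`.
-/

open Real Set Filter Topology MeasureTheory

theorem IsLocalMax.deriv_deriv_nonpos {f : ℝ → ℝ} {x₀ : ℝ} (h : IsLocalMax f x₀)
    (hc : ContinuousAt f x₀) : deriv (deriv f) x₀ ≤ 0 := by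
  by_contra! hpos
  have hconst : f =ᶠ[𝓝 x₀] fun _ ↦ f x₀ :=
    ((isLocalMin_of_deriv_deriv_pos hpos h.deriv_eq_zero hc).and h).mono
      fun x hx ↦ le_antisymm hx.2 hx.1
  have hderiv : deriv f =ᶠ[𝓝 x₀] fun _ ↦ 0 :=
    hconst.eventuallyEq_nhds.mono fun x hx ↦ by rw [hx.deriv_eq, deriv_const]
  simp [hderiv.deriv_eq] at hpos

theorem nonpos_on_Icc_of_le_deriv2 {w w' w'' : ℝ → ℝ} {a b : ℝ}
    (hw : ContinuousOn w (Icc a b))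
    (hw' : ∀ s ∈ Ioo a b, HasDerivAt w (w' s) s)
    (hw'' : ∀ s ∈ Ioo a b, HasDerivAt w' (w'' s) s)
    (hle : ∀ s ∈ Ioo a b, w s ≤ w'' s) (ha : w a ≤ 0) (hb : w b ≤ 0) :
    ∀ s ∈ Icc a b, w s ≤ 0 := by
  intro s hs
  obtain ⟨c, hc, hmax⟩ := isCompact_Icc.exists_isMaxOn ⟨s, hs⟩ hw
  refine (hmax hs).trans (not_lt.1 fun hpos ↦ ?_)
  have hc' : c ∈ Ioo a b :=
    ⟨hc.1.lt_of_ne (by rintro rfl; linarith), hc.2.lt_of_ne (by rintro rfl; linarith)⟩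
  have hderiv : deriv w =ᶠ[𝓝 c] w' :=
    eventually_of_mem (Ioo_mem_nhds hc'.1 hc'.2) fun x hx ↦ (hw' x hx).deriv
  have hnonpos := (hmax.isLocalMax (Icc_mem_nhds hc'.1 hc'.2)).deriv_deriv_nonpos
    (hw' c hc').continuousAt
  rw [hderiv.deriv_eq, (hw'' c hc').deriv] at hnonpos
  linarith [hle c hc']

theorem le_on_Icc_of_deriv2_sub_le {u u' u'' v v' v'' : ℝ → ℝ} {a b : ℝ}
    (hu : ContinuousOn u (Icc a b)) (hv : ContinuousOn v (Icc a b))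
    (hu' : ∀ s ∈ Ioo a b, HasDerivAt u (u' s) s) (hu'' : ∀ s ∈ Ioo a b, HasDerivAt u' (u'' s) s)
    (hv' : ∀ s ∈ Ioo a b, HasDerivAt v (v' s) s) (hv'' : ∀ s ∈ Ioo a b, HasDerivAt v' (v'' s) s)
    (hle : ∀ s ∈ Ioo a b, v'' s - v s ≤ u'' s - u s) (ha : u a ≤ v a) (hb : u b ≤ v b) :
    ∀ s ∈ Icc a b, u s ≤ v s := fun s hs ↦
  sub_nonpos.1 <| nonpos_on_Icc_of_le_deriv2 (hu.sub hv) (fun x hx ↦ (hu' x hx).sub (hv' x hx))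
    (fun x hx ↦ (hu'' x hx).sub (hv'' x hx))
    (fun x hx ↦ by simp only [Pi.sub_apply]; linarith [hle x hx]) (sub_nonpos.2 ha)
    (sub_nonpos.2 hb) s hs

theorem hasDerivAt_exp_add_exp (A B c d s : ℝ) :
    HasDerivAt (fun x ↦ A * exp (x - c) + B * exp (-x - d))
      (A * exp (s - c) + -B * exp (-s - d)) s := by
  refine ((((hasDerivAt_id s).sub_const c).exp.const_mul A).add
    (((hasDerivAt_id s).neg.sub_const d).exp.const_mul B)).congr_deriv ?_
  simp only [Pi.neg_apply, id, mul_one, mul_neg, neg_mul]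

theorem hasDerivAt_integral_of_continuousOn {f : ℝ → ℝ} {a b u s : ℝ}
    (hf : ContinuousOn f (Icc a b)) (hu : u ∈ Icc a b) (hs : s ∈ Ioo a b) :
    HasDerivAt (fun x ↦ ∫ q in u..x, f q) (f s) s :=
  intervalIntegral.integral_hasDerivAt_right
    ((hf.mono (uIcc_subset_Icc hu (Ioo_subset_Icc_self hs))).intervalIntegrable)
    ((hf.mono Ioo_subset_Icc_self).stronglyMeasurableAtFilter isOpen_Ioo s hs)
    (hf.continuousAt (Icc_mem_nhds hs.1 hs.2))

noncomputable def leftGreenIntegral (h : ℝ → ℝ) (a s : ℝ) : ℝ :=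
  exp (-s) * ∫ q in a..s, exp q * h q

noncomputable def rightGreenIntegral (h : ℝ → ℝ) (b s : ℝ) : ℝ :=
  exp s * ∫ q in s..b, exp (-q) * h q

/-- Equal to `½ ∫ₐᵇ e^{-|s-q|} h q dq` on `[a, b]` (`greenPotential_eq_integral`); the integral is
split at `q = s` so that it can be differentiated. -/
noncomputable def greenPotential (h : ℝ → ℝ) (a b s : ℝ) : ℝ :=
  (leftGreenIntegral h a s + rightGreenIntegral h b s) / 2

section greenPotential

variable {h : ℝ → ℝ} {a b s : ℝ}

theorem hasDerivAt_leftGreenIntegral (hh : ContinuousOn h (Icc a b)) (hs : s ∈ Ioo a b) :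
    HasDerivAt (leftGreenIntegral h a) (h s - leftGreenIntegral h a s) s := by
  have hint := hasDerivAt_integral_of_continuousOn (f := fun q ↦ exp q * h q)
    (continuous_exp.continuousOn.mul hh)
    (left_mem_Icc.2 (hs.1.trans hs.2).le) hs
  refine ((hasDerivAt_neg' s).exp.mul hint).congr_deriv ?_
  rw [leftGreenIntegral, ← mul_assoc, ← exp_add, neg_add_cancel, exp_zero]
  ring

theorem hasDerivAt_rightGreenIntegral (hh : ContinuousOn h (Icc a b)) (hs : s ∈ Ioo a b) :
    HasDerivAt (rightGreenIntegral h b) (rightGreenIntegral h b s - h s) s := by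
  have hint := hasDerivAt_integral_of_continuousOn (f := fun q ↦ exp (-q) * h q)
    ((continuous_exp.comp continuous_neg).continuousOn.mul hh)
    (right_mem_Icc.2 (hs.1.trans hs.2).le) hs
  have hint' : HasDerivAt (fun x ↦ ∫ q in x..b, exp (-q) * h q) (-(exp (-s) * h s)) s := by
    simp only [intervalIntegral.integral_symm b]
    exact hint.neg
  refine ((hasDerivAt_exp s).mul hint').congr_deriv ?_
  rw [rightGreenIntegral, mul_neg, ← mul_assoc, ← exp_add, add_neg_cancel, exp_zero]
  ring

theorem hasDerivAt_greenPotential (hh : ContinuousOn h (Icc a b)) (hs : s ∈ Ioo a b) :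
    HasDerivAt (greenPotential h a b)
      ((rightGreenIntegral h b s - leftGreenIntegral h a s) / 2) s := by
  refine (((hasDerivAt_leftGreenIntegral hh hs).add
    (hasDerivAt_rightGreenIntegral hh hs)).div_const 2).congr_deriv ?_
  ring

theorem hasDerivAt_greenPotential_deriv (hh : ContinuousOn h (Icc a b)) (hs : s ∈ Ioo a b) :
    HasDerivAt (fun x ↦ (rightGreenIntegral h b x - leftGreenIntegral h a x) / 2)
      (greenPotential h a b s - h s) s := by
  refine (((hasDerivAt_rightGreenIntegral hh hs).sub
    (hasDerivAt_leftGreenIntegral hh hs)).div_const 2).congr_deriv ?_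
  rw [greenPotential]
  ring

theorem continuousOn_greenPotential (hab : a ≤ b) (hh : ContinuousOn h (Icc a b)) :
    ContinuousOn (greenPotential h a b) (Icc a b) := by
  have hint₁ : IntegrableOn (fun q ↦ exp q * h q) (uIcc a b) := by
    rw [uIcc_of_le hab]; exact (continuous_exp.continuousOn.mul hh).integrableOn_Icc
  have hint₂ : IntegrableOn (fun q ↦ exp (-q) * h q) (uIcc a b) := by
    rw [uIcc_of_le hab]
    exact ((continuous_exp.comp continuous_neg).continuousOn.mul hh).integrableOn_Icc
  have h₁ := intervalIntegral.continuousOn_primitive_interval hint₁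
  have h₂ := intervalIntegral.continuousOn_primitive_interval_left hint₂
  rw [uIcc_of_le hab] at h₁ h₂
  unfold greenPotential leftGreenIntegral rightGreenIntegral
  fun_prop

theorem greenPotential_eq_integral (hh : ContinuousOn h (Icc a b)) (hs : s ∈ Icc a b) :
    greenPotential h a b s = 1 / 2 * ∫ q in a..b, exp (-|s - q|) * h q := by
  have hint : ∀ u ∈ Icc a b, ∀ v ∈ Icc a b,
      IntervalIntegrable (fun q ↦ exp (-|s - q|) * h q) volume u v :=
    fun u hu v hv ↦ ((by fun_prop : Continuous fun q ↦ exp (-|s - q|)).continuousOn.mul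
      (hh.mono (uIcc_subset_Icc hu hv))).intervalIntegrable
  have hab := hs.1.trans hs.2
  rw [← intervalIntegral.integral_add_adjacent_intervals (hint a (left_mem_Icc.2 hab) s hs)
    (hint s hs b (right_mem_Icc.2 hab)), greenPotential, leftGreenIntegral, rightGreenIntegral,
    ← intervalIntegral.integral_const_mul, ← intervalIntegral.integral_const_mul]
  have hleft : EqOn (fun q ↦ exp (-s) * (exp q * h q)) (fun q ↦ exp (-|s - q|) * h q)
      (uIcc a s) := by
    intro q hq
    rw [uIcc_of_le hs.1] at hq
    simp only [abs_of_nonneg (sub_nonneg.2 hq.2), ← mul_assoc, ← exp_add]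
    ring_nf
  have hright : EqOn (fun q ↦ exp s * (exp (-q) * h q)) (fun q ↦ exp (-|s - q|) * h q)
      (uIcc s b) := by
    intro q hq
    rw [uIcc_of_le hs.2] at hq
    simp only [abs_of_nonpos (sub_nonpos.2 hq.1), ← mul_assoc, ← exp_add]
    ring_nf
  rw [intervalIntegral.integral_congr hleft, intervalIntegral.integral_congr hright]
  ring

theorem greenPotential_nonneg (hh : ContinuousOn h (Icc a b))
    (hpos : ∀ q ∈ Icc a b, 0 ≤ h q) (hs : s ∈ Icc a b) : 0 ≤ greenPotential h a b s := by
  rw [greenPotential_eq_integral hh hs]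
  exact mul_nonneg (by norm_num) (intervalIntegral.integral_nonneg (hs.1.trans hs.2)
    fun q hq ↦ mul_nonneg (exp_pos _).le (hpos q hq))

end greenPotential

theorem ode_comparison_collar_general (Ym Yp Ap Am : ℝ) (h th th' th'' : ℝ → ℝ)
    (hY : -Ym ≤ Yp)
    (hhc : ContinuousOn h (Set.Icc (-Ym) Yp))
    (hhpos : ∀ q ∈ Set.Icc (-Ym) Yp, 0 ≤ h q)
    (hthc : ContinuousOn th (Set.Icc (-Ym) Yp))
    (hd1 : ∀ s ∈ Set.Ioo (-Ym) Yp, HasDerivAt th (th' s) s)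
    (hd2 : ∀ s ∈ Set.Ioo (-Ym) Yp, HasDerivAt th' (th'' s) s)
    (hineq : ∀ s ∈ Set.Ioo (-Ym) Yp, th'' s - th s ≥ -h s)
    (hAp : 0 ≤ Ap) (hAm : 0 ≤ Am)
    (hbp : th Yp ≤ Ap) (hbm : th (-Ym) ≤ Am) :
    ∀ s ∈ Set.Icc (-Ym) Yp,
      th s ≤ Ap * Real.exp (s - Yp) + Am * Real.exp (-s - Ym) +
        (1 / 2) * ∫ q in (-Ym)..Yp, Real.exp (-|s - q|) * h q := by
  set F : ℝ → ℝ := fun x ↦ Ap * exp (x - Yp) + Am * exp (-x - Ym) + greenPotential h (-Ym) Yp x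
  intro s hs
  rw [← greenPotential_eq_integral hhc hs]
  refine le_on_Icc_of_deriv2_sub_le (v := F) (v'' := fun x ↦ F x - h x) hthc
    ((by fun_prop : Continuous fun x ↦ Ap * exp (x - Yp) + Am * exp (-x - Ym)).continuousOn.add
      (continuousOn_greenPotential hY hhc)) hd1 hd2
    (fun x hx ↦ (hasDerivAt_exp_add_exp Ap Am Yp Ym x).add (hasDerivAt_greenPotential hhc hx))
    (fun x hx ↦ ((hasDerivAt_exp_add_exp Ap (-Am) Yp Ym x).add
      (hasDerivAt_greenPotential_deriv hhc hx)).congr_deriv (by simp only [F, neg_neg]; ring))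
    (fun x hx ↦ by linarith [hineq x hx]) ?_ ?_ s hs
  · have hG := greenPotential_nonneg hhc hhpos (left_mem_Icc.2 hY)
    simp only [F, neg_neg, sub_self, exp_zero, mul_one]
    linarith [mul_nonneg hAp (exp_pos (-Ym - Yp)).le]
  · have hG := greenPotential_nonneg hhc hhpos (right_mem_Icc.2 hY)
    simp only [F, sub_self, exp_zero, mul_one]
    linarith [mul_nonneg hAm (exp_pos (-Yp - Ym)).le]

/-- Maximum-principle comparison: if `ϑ` is `C²` on `[−Y₋, Y₊]` with `ϑ″ − ϑ ≥ −h` for a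
continuous nonnegative `h`, and `A₊, A₋ ≥ 0` dominate the boundary values, then
`ϑ(s) ≤ A₊ e^{s−Y₊} + A₋ e^{−s−Y₋} + ½ ∫_{−Y₋}^{Y₊} e^{−|s−q|} h(q) dq` on `[−Y₋, Y₊]`. -/
theorem ode_comparison_collar (Ym Yp Ap Am : ℝ) (h th th' th'' : ℝ → ℝ)
    (hY : -Ym ≤ Yp)
    (hhc : ContinuousOn h (Set.Icc (-Ym) Yp))
    (hhpos : ∀ q ∈ Set.Icc (-Ym) Yp, 0 ≤ h q)
    (hthc : ContinuousOn th (Set.Icc (-Ym) Yp))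
    (hth'c : ContinuousOn th' (Set.Ioo (-Ym) Yp))
    (hth''c : ContinuousOn th'' (Set.Ioo (-Ym) Yp))
    (hd1 : ∀ s ∈ Set.Ioo (-Ym) Yp, HasDerivAt th (th' s) s)
    (hd2 : ∀ s ∈ Set.Ioo (-Ym) Yp, HasDerivAt th' (th'' s) s)
    (hineq : ∀ s ∈ Set.Ioo (-Ym) Yp, th'' s - th s ≥ -h s)
    (hAp : 0 ≤ Ap) (hAm : 0 ≤ Am)
    (hbp : th Yp ≤ Ap) (hbm : th (-Ym) ≤ Am) :
    ∀ s ∈ Set.Icc (-Ym) Yp,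
      th s ≤ Ap * Real.exp (s - Yp) + Am * Real.exp (-s - Ym) +
        (1 / 2) * ∫ q in (-Ym)..Yp, Real.exp (-|s - q|) * h q :=
  ode_comparison_collar_general Ym Yp Ap Am h th th' th'' hY hhc hhpos hthc hd1 hd2 hineq hAp hAm
    hbp hbm
end

section
/- Let u be a smooth function on a cylinder (−X, X) × S¹ equipped with the metric ρ(s)²(ds²+dθ²) satisfying −Δ_g u = λu, and set ϑ(s) = ∫_{S¹} |u_θ(s,θ)|² dθ. Then ϑ″(s) − ϑ(s) ≥ −λ² ∫_{S¹} ρ(s)⁴ u(s,θ)² dθ for all s ∈ (−X, X). -/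
open Real Set MeasureTheory intervalIntegral Complex


noncomputable def pd1 (V : ℝ × ℝ → ℝ) (p : ℝ × ℝ) : ℝ := fderiv ℝ V p (1, 0)
noncomputable def pd2 (V : ℝ × ℝ → ℝ) (p : ℝ × ℝ) : ℝ := fderiv ℝ V p (0, 1)

lemma contDiff_pd1 {V : ℝ × ℝ → ℝ} (h : ContDiff ℝ (⊤:ℕ∞) V) : ContDiff ℝ (⊤:ℕ∞) (pd1 V) :=
  ((contDiff_infty_iff_fderiv.mp h).2.clm_apply contDiff_const)

lemma contDiff_pd2 {V : ℝ × ℝ → ℝ} (h : ContDiff ℝ (⊤:ℕ∞) V) : ContDiff ℝ (⊤:ℕ∞) (pd2 V) :=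
  ((contDiff_infty_iff_fderiv.mp h).2.clm_apply contDiff_const)

lemma hasDerivAt_pd1 {V : ℝ × ℝ → ℝ} (h : ContDiff ℝ (⊤:ℕ∞) V) (s θ : ℝ) :
    HasDerivAt (fun t => V (t, θ)) (pd1 V (s, θ)) s := by
  have h1 : HasDerivAt (fun t : ℝ => (t, θ)) ((1 : ℝ), (0 : ℝ)) s :=
    (hasDerivAt_id s).prodMk (hasDerivAt_const s θ)
  exact (h.differentiable (by simp) (s, θ)).hasFDerivAt.comp_hasDerivAt s h1

lemma hasDerivAt_pd2 {V : ℝ × ℝ → ℝ} (h : ContDiff ℝ (⊤:ℕ∞) V) (s θ : ℝ) :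
    HasDerivAt (fun t => V (s, t)) (pd2 V (s, θ)) θ := by
  have h1 : HasDerivAt (fun t : ℝ => (s, t)) ((0 : ℝ), (1 : ℝ)) θ :=
    (hasDerivAt_const θ s).prodMk (hasDerivAt_id θ)
  exact (h.differentiable (by simp) (s, θ)).hasFDerivAt.comp_hasDerivAt θ h1

lemma pd1_eq_deriv {V : ℝ × ℝ → ℝ} (h : ContDiff ℝ (⊤:ℕ∞) V) (s θ : ℝ) :
    pd1 V (s, θ) = deriv (fun t => V (t, θ)) s := (hasDerivAt_pd1 h s θ).deriv.symm

lemma pd2_eq_deriv {V : ℝ × ℝ → ℝ} (h : ContDiff ℝ (⊤:ℕ∞) V) (s θ : ℝ) :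
    pd2 V (s, θ) = deriv (fun t => V (s, t)) θ := (hasDerivAt_pd2 h s θ).deriv.symm

lemma pd_symm {V : ℝ × ℝ → ℝ} (h : ContDiff ℝ (⊤:ℕ∞) V) : pd1 (pd2 V) = pd2 (pd1 V) := by
  funext p
  have hd : ContDiff ℝ (⊤:ℕ∞) (fderiv ℝ V) := (contDiff_infty_iff_fderiv.mp h).2
  have hf'' : HasFDerivAt (fderiv ℝ V) (fderiv ℝ (fderiv ℝ V) p) p :=
    (hd.differentiable (by simp) p).hasFDerivAt
  have hsymm := second_derivative_symmetric
    (fun y => (h.differentiable (by simp) y).hasFDerivAt) hf'' ((1:ℝ), (0:ℝ)) ((0:ℝ), (1:ℝ))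
  have e1 : pd1 (pd2 V) p = fderiv ℝ (fderiv ℝ V) p (1, 0) (0, 1) := by
    unfold pd1 pd2
    rw [fderiv_clm_apply (hd.differentiable (by simp) p) (differentiableAt_const _)]
    simp
  have e2 : pd2 (pd1 V) p = fderiv ℝ (fderiv ℝ V) p (0, 1) (1, 0) := by
    unfold pd1 pd2
    rw [fderiv_clm_apply (hd.differentiable (by simp) p) (differentiableAt_const _)]
    simp
  rw [e1, e2, hsymm]


lemma hasDerivAt_integral_pd1 {G : ℝ × ℝ → ℝ} (hG : ContDiff ℝ (⊤:ℕ∞) G) (a b s : ℝ) :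
    HasDerivAt (fun t => ∫ θ in a..b, G (t, θ)) (∫ θ in a..b, pd1 G (s, θ)) s := by
  have hc : Continuous (pd1 G) := (contDiff_pd1 hG).continuous
  obtain ⟨C, hC⟩ := (isCompact_Icc.prod isCompact_uIcc :
      IsCompact (Icc (s-1) (s+1) ×ˢ uIcc a b)).exists_bound_of_continuousOn hc.continuousOn
  refine (hasDerivAt_integral_of_dominated_loc_of_deriv_le (F := fun x t => G (x, t))
    (F' := fun x t => pd1 G (x, t)) (bound := fun _ => C) (Metric.ball_mem_nhds s one_pos)
    (Filter.Eventually.of_forall fun x =>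
      (hG.continuous.comp (continuous_const.prodMk continuous_id)).aestronglyMeasurable)
    ((hG.continuous.comp (continuous_const.prodMk continuous_id)).intervalIntegrable a b)
    ((hc.comp (continuous_const.prodMk continuous_id)).aestronglyMeasurable)
    (Filter.Eventually.of_forall fun t ht x hx => ?_)
    (intervalIntegrable_const)
    (Filter.Eventually.of_forall fun t ht x hx => hasDerivAt_pd1 hG x t)).2
  have hx' := abs_lt.mp (by simpa [Real.dist_eq] using hx)
  exact hC (x, t) ⟨⟨by linarith [hx'.1], by linarith [hx'.2]⟩, Set.uIoc_subset_uIcc ht⟩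

lemma periodic_deriv' {f : ℝ → ℝ} (h : Function.Periodic f (2*π)) :
    Function.Periodic (deriv f) (2*π) := by
  intro x
  have : f = fun y => f (y + 2*π) := by funext y; exact (h y).symm
  conv_rhs => rw [this]
  rw [deriv_comp_add_const]

lemma wirtinger {f : ℝ → ℝ} (hf : ContDiff ℝ (⊤:ℕ∞) f)
    (hper : Function.Periodic f (2*π))
    (hmean : ∫ x in (0:ℝ)..(2*π), f x = 0) :
    ∫ x in (0:ℝ)..(2*π), f x ^ 2 ≤ ∫ x in (0:ℝ)..(2*π), (deriv f x) ^ 2 := by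
  haveI hT : Fact (0 < 2*π) := ⟨by positivity⟩
  set T : ℝ := 2*π with hTdef
  have hb : (0:ℝ) < 0 + T := by simpa using hT.out
  have hdf : ContDiff ℝ (⊤:ℕ∞) (deriv f) := (contDiff_infty_iff_deriv.mp hf).2
  have hdper : Function.Periodic (deriv f) T := periodic_deriv' hper
  -- complex lifts
  set g : ℝ → ℂ := fun x => (f x : ℂ) with hg
  set g' : ℝ → ℂ := fun x => ((deriv f x : ℝ) : ℂ) with hg'
  have hgd : ∀ x : ℝ, HasDerivAt g (g' x) x := fun x =>
    ((hf.differentiable (by simp) x).hasDerivAt).ofReal_comp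
  have hgc : Continuous g := continuous_ofReal.comp hf.continuous
  have hg'c : Continuous g' := continuous_ofReal.comp hdf.continuous
  have hgp : g 0 = g (0 + T) := by simp [hg, (hper 0).symm, zero_add]
  have hg'p : g' 0 = g' (0 + T) := by simp [hg', (hdper 0).symm, zero_add]
  set F : AddCircle T → ℂ := AddCircle.liftIco T 0 g with hF
  set F' : AddCircle T → ℂ := AddCircle.liftIco T 0 g' with hF'
  have hFc : Continuous F := AddCircle.liftIco_continuous hgp hgc.continuousOn
  have hF'c : Continuous F' := AddCircle.liftIco_continuous hg'p hg'c.continuousOn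
  set c : ℤ → ℂ := fourierCoeff F with hc
  set d : ℤ → ℂ := fourierCoeff F' with hd
  -- c in terms of fourierCoeffOn
  have hcOn : ∀ n, c n = fourierCoeffOn hb g n := fun n => fourierCoeff_liftIco_eq g n
  have hdOn : ∀ n, d n = fourierCoeffOn hb g' n := fun n => fourierCoeff_liftIco_eq g' n
  -- c 0 = 0
  have hc0 : c 0 = 0 := by
    rw [hcOn, fourierCoeffOn_eq_integral]
    simp only [Int.neg_zero, fourier_zero, one_smul, zero_add, sub_zero]
    rw [intervalIntegral.integral_ofReal (f := f)]
    rw [hmean]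
    simp
  -- derivative relation for coefficients
  have hdn : ∀ n : ℤ, n ≠ 0 → d n = I * n * c n := by
    intro n hn
    have key := fourierCoeffOn_of_hasDerivAt hb hn (fun x _ => hgd x)
      (hg'c.intervalIntegrable 0 (0+T))
    rw [← hcOn, ← hdOn, ← hgp, sub_self, mul_zero, zero_sub] at key
    have hz : (-2*(π:ℂ)*I*(n:ℤ)) ≠ 0 := by
      simp [Real.pi_ne_zero, Complex.I_ne_zero, hn]
    have hπ : (π:ℂ) ≠ 0 := by exact_mod_cast Real.pi_ne_zero
    have hn' : (n:ℂ) ≠ 0 := Int.cast_ne_zero.mpr hn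
    rw [key, hTdef]
    push_cast
    field_simp
    ring_nf
  -- norm comparison
  have hcd : ∀ n : ℤ, ‖c n‖ ^ 2 ≤ ‖d n‖ ^ 2 := by
    intro n
    rcases eq_or_ne n 0 with rfl | hn
    · rw [hc0]; simpa using sq_nonneg ‖d 0‖
    · have h1 : ‖d n‖ = |(n:ℝ)| * ‖c n‖ := by
        rw [hdn n hn]
        simp [norm_mul]
      have h2 : (1:ℝ) ≤ |(n:ℝ)| := by
        exact_mod_cast Int.one_le_abs (by exact_mod_cast hn)
      have h3 : ‖c n‖ ≤ ‖d n‖ := by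
        rw [h1]
        nlinarith [norm_nonneg (c n)]
      exact pow_le_pow_left₀ (norm_nonneg _) h3 2
  -- Parseval for continuous maps
  have par : ∀ H : C(AddCircle T, ℂ),
      ∑' n : ℤ, ‖fourierCoeff (H : AddCircle T → ℂ) n‖ ^ 2
        = (1/T) * ∫ x in (0:ℝ)..(0+T), ‖H (x : AddCircle T)‖ ^ 2 := by
    intro H
    have h1 := tsum_sq_fourierCoeff (ContinuousMap.toLp 2 AddCircle.haarAddCircle ℂ H)
    have h2 : ∀ n : ℤ, fourierCoeff (↑(ContinuousMap.toLp 2 AddCircle.haarAddCircle ℂ H)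
        : AddCircle T → ℂ) n = fourierCoeff (H : AddCircle T → ℂ) n := fourierCoeff_toLp H
    simp_rw [h2] at h1
    rw [h1]
    have h3 : ∫ t : AddCircle T, ‖(↑(ContinuousMap.toLp 2 AddCircle.haarAddCircle ℂ H)
        : AddCircle T → ℂ) t‖ ^ 2 ∂AddCircle.haarAddCircle
        = ∫ t : AddCircle T, ‖H t‖ ^ 2 ∂AddCircle.haarAddCircle := by
      apply MeasureTheory.integral_congr_ae
      filter_upwards [ContinuousMap.coeFn_toLp (p := 2) AddCircle.haarAddCircle (𝕜 := ℂ) H]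
        with t ht
      rw [ht]
    rw [h3]
    have h4 := AddCircle.intervalIntegral_preimage T 0 (fun t => ‖H t‖ ^ 2)
    have h5 : ∫ t : AddCircle T, ‖H t‖ ^ 2
        = T * ∫ t : AddCircle T, ‖H t‖ ^ 2 ∂AddCircle.haarAddCircle := by
      rw [AddCircle.volume_eq_smul_haarAddCircle, MeasureTheory.integral_smul_measure,
        ENNReal.toReal_ofReal hT.out.le]
      simp
    rw [h4, h5]
    field_simp
    exact (mul_div_cancel_right₀ _ hT.out.ne').symm
  -- summability
  have hsum : ∀ H : C(AddCircle T, ℂ),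
      Summable (fun n : ℤ => ‖fourierCoeff (H : AddCircle T → ℂ) n‖ ^ 2) := by
    intro H
    have h := (lp.memℓp (fourierBasis.repr
        (ContinuousMap.toLp 2 AddCircle.haarAddCircle ℂ H))).summable (p := 2) (by norm_num)
    refine h.congr fun n => ?_
    rw [fourierBasis_repr, fourierCoeff_toLp]
    norm_num
  have hFsum : Summable (fun n : ℤ => ‖c n‖ ^ 2) := hsum ⟨F, hFc⟩
  have hF'sum : Summable (fun n : ℤ => ‖d n‖ ^ 2) := hsum ⟨F', hF'c⟩
  have hle : ∑' n : ℤ, ‖c n‖ ^ 2 ≤ ∑' n : ℤ, ‖d n‖ ^ 2 := Summable.tsum_le_tsum hcd hFsum hF'sum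
  -- identify the two sides
  have hae : ∀ᵐ x : ℝ, x ≠ T := by
    rw [MeasureTheory.ae_iff]
    simpa [not_not, Set.setOf_eq_eq_singleton] using measure_singleton (μ := volume) T
  have hFint : ∫ x in (0:ℝ)..(0+T), ‖F (x : AddCircle T)‖ ^ 2 = ∫ x in (0:ℝ)..T, f x ^ 2 := by
    rw [zero_add]
    apply intervalIntegral.integral_congr_ae
    filter_upwards [hae] with x hx hxI
    rw [Set.uIoc_of_le hT.out.le] at hxI
    have hxI' : x ∈ Set.Ico (0:ℝ) (0+T) := ⟨hxI.1.le, by rw [zero_add]; exact lt_of_le_of_ne hxI.2 hx⟩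
    rw [hF, AddCircle.liftIco_coe_apply hxI']
    simp [hg, sq_abs]
  have hF'int : ∫ x in (0:ℝ)..(0+T), ‖F' (x : AddCircle T)‖ ^ 2
      = ∫ x in (0:ℝ)..T, (deriv f x) ^ 2 := by
    rw [zero_add]
    apply intervalIntegral.integral_congr_ae
    filter_upwards [hae] with x hx hxI
    rw [Set.uIoc_of_le hT.out.le] at hxI
    have hxI' : x ∈ Set.Ico (0:ℝ) (0+T) := ⟨hxI.1.le, by rw [zero_add]; exact lt_of_le_of_ne hxI.2 hx⟩
    rw [hF', AddCircle.liftIco_coe_apply hxI']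
    simp [hg', sq_abs]
  have hparF := par ⟨F, hFc⟩
  have hparF' := par ⟨F', hF'c⟩
  simp only [ContinuousMap.coe_mk] at hparF hparF'
  rw [← hc, hFint] at hparF
  rw [← hd, hF'int] at hparF'
  rw [hparF, hparF'] at hle
  have hTpos : (0:ℝ) < 1/T := by positivity
  exact (mul_le_mul_iff_right₀ hTpos).mp hle

/-- Let `u` be a smooth function on a cylinder `(−X, X) × S¹` (`2π`-periodic in `θ`) equipped
with the metric `ρ(s)²(ds²+dθ²)`, satisfying the eigenvalue equation `−Δ_g u = λ u` where
`Δ_g u = ρ^{−2}(u_ss + u_θθ)`. With `ϑ(s) = ∫_{S¹} |u_θ(s,θ)|² dθ`, one has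
`ϑ″(s) − ϑ(s) ≥ −λ² ∫_{S¹} ρ(s)⁴ u(s,θ)² dθ` for all `s ∈ (−X, X)`. -/
theorem angular_energy_differential_inequality (X lam : ℝ) (ρ : ℝ → ℝ) (u : ℝ → ℝ → ℝ)
    (hρ : ∀ s, 0 < ρ s)
    (hu : ContDiff ℝ (⊤ : ℕ∞) (fun p : ℝ × ℝ => u p.1 p.2))
    (hper : ∀ s θ, u s (θ + 2 * π) = u s θ)
    (heig : ∀ s θ : ℝ, |s| < X →
      -(((ρ s) ^ 2)⁻¹ * (deriv (deriv (fun t => u t θ)) s + deriv (deriv (u s)) θ))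
        = lam * u s θ) :
    ∀ s : ℝ, |s| < X →
      deriv (deriv (fun t => ∫ θ in (0:ℝ)..(2 * π), (deriv (u t) θ) ^ 2)) s
          - (∫ θ in (0:ℝ)..(2 * π), (deriv (u s) θ) ^ 2)
        ≥ -(lam ^ 2 * ∫ θ in (0:ℝ)..(2 * π), (ρ s) ^ 4 * (u s θ) ^ 2) := by
  intro s hs
  have hU : ContDiff ℝ (⊤:ℕ∞) (fun p : ℝ × ℝ => u p.1 p.2) := hu.of_le (by simp)
  set U : ℝ × ℝ → ℝ := fun p => u p.1 p.2 with hUdef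
  set w : ℝ × ℝ → ℝ := pd2 U with hwdef
  set w1 : ℝ × ℝ → ℝ := pd1 w with hw1def
  set w2 : ℝ × ℝ → ℝ := pd2 w with hw2def
  set w3 : ℝ × ℝ → ℝ := pd2 w2 with hw3def
  have hw : ContDiff ℝ (⊤:ℕ∞) w := contDiff_pd2 hU
  have hw1c : ContDiff ℝ (⊤:ℕ∞) w1 := contDiff_pd1 hw
  have hw2c : ContDiff ℝ (⊤:ℕ∞) w2 := contDiff_pd2 hw
  have hw3c : ContDiff ℝ (⊤:ℕ∞) w3 := contDiff_pd2 hw2c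
  have ha : ∀ t θ : ℝ, deriv (u t) θ = w (t, θ) := fun t θ => (pd2_eq_deriv hU t θ).symm
  have hb2 : ∀ t θ : ℝ, deriv (deriv (u t)) θ = w2 (t, θ) := by
    intro t θ
    have h : deriv (u t) = fun x => w (t, x) := funext fun x => ha t x
    rw [h]
    exact (pd2_eq_deriv hw t θ).symm
  have hcc : ∀ θ t : ℝ, deriv (deriv (fun x => u x θ)) t = pd1 (pd1 U) (t, θ) := by
    intro θ t
    have h : deriv (fun x => u x θ) = fun x => pd1 U (x, θ) :=
      funext fun x => (pd1_eq_deriv hU x θ).symm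
    rw [h]
    exact (pd1_eq_deriv (contDiff_pd1 hU) t θ).symm
  have heig' : ∀ t θ : ℝ, |t| < X →
      pd1 (pd1 U) (t, θ) + w2 (t, θ) = -(lam * ρ t ^ 2 * u t θ) := by
    intro t θ ht
    have h := heig t θ ht
    rw [hcc θ t, hb2 t θ] at h
    have hρ2 : (ρ t ^ 2) ≠ 0 := pow_ne_zero _ (hρ t).ne'
    field_simp at h
    rw [← neg_div, div_eq_iff hρ2] at h
    linarith
  have hsymm2 : pd1 w1 = pd2 (pd1 (pd1 U)) := by
    rw [hw1def, hwdef, pd_symm hU, pd_symm (contDiff_pd1 hU)]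
  have hf : ∀ θ : ℝ, pd1 w1 (s, θ) = -(lam * ρ s ^ 2 * w (s, θ)) - w3 (s, θ) := by
    intro θ
    rw [hsymm2, pd2_eq_deriv (contDiff_pd1 (contDiff_pd1 hU)) s θ]
    have hfun : (fun x => pd1 (pd1 U) (s, x))
        = fun x => -(lam * ρ s ^ 2 * U (s, x)) - w2 (s, x) := by
      funext x
      have := heig' s x hs
      simp only [hUdef]
      linarith
    rw [hfun]
    have h1 : HasDerivAt (fun x => U (s, x)) (w (s, θ)) θ := hasDerivAt_pd2 hU s θ
    have h2 : HasDerivAt (fun x => w2 (s, x)) (w3 (s, θ)) θ := hasDerivAt_pd2 hw2c s θ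
    exact ((h1.const_mul (lam * ρ s ^ 2)).neg.sub h2).deriv
  -- second derivative of the angular energy
  set G2 : ℝ × ℝ → ℝ := fun p => 2 * w p * w1 p with hG2def
  have hG2 : ContDiff ℝ (⊤:ℕ∞) G2 := (contDiff_const.mul hw).mul hw1c
  have hG1 : ContDiff ℝ (⊤:ℕ∞) (fun p : ℝ × ℝ => w p ^ 2) := hw.pow 2
  have hϑ1 : deriv (fun t => ∫ θ in (0:ℝ)..(2*π), (deriv (u t) θ) ^ 2)
      = fun t => ∫ θ in (0:ℝ)..(2*π), G2 (t, θ) := by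
    funext t
    have h0 : (fun t' => ∫ θ in (0:ℝ)..(2*π), (deriv (u t') θ) ^ 2)
        = fun t' => ∫ θ in (0:ℝ)..(2*π), (fun p : ℝ × ℝ => w p ^ 2) (t', θ) := by
      funext t'
      apply intervalIntegral.integral_congr
      intro θ _
      beta_reduce
      rw [ha t' θ]
    rw [h0, (hasDerivAt_integral_pd1 hG1 0 (2*π) t).deriv]
    apply intervalIntegral.integral_congr
    intro θ _
    have h1 : HasDerivAt (fun x => w (x, θ) ^ 2) (2 * w (t, θ) * w1 (t, θ)) t := by
      have h2 := (hasDerivAt_pd1 hw t θ).pow 2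
      norm_num at h2
      exact h2
    show pd1 (fun p : ℝ × ℝ => w p ^ 2) (t, θ) = G2 (t, θ)
    rw [pd1_eq_deriv hG1 t θ, h1.deriv]
  have hϑ2 : deriv (deriv (fun t => ∫ θ in (0:ℝ)..(2*π), (deriv (u t) θ) ^ 2)) s
      = ∫ θ in (0:ℝ)..(2*π), (2 * w1 (s, θ) ^ 2 + 2 * w (s, θ) * pd1 w1 (s, θ)) := by
    rw [hϑ1, (hasDerivAt_integral_pd1 hG2 0 (2*π) s).deriv]
    apply intervalIntegral.integral_congr
    intro θ _
    have h1 : HasDerivAt (fun x => 2 * w (x, θ) * w1 (x, θ))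
        (2 * w1 (s, θ) * w1 (s, θ) + 2 * w (s, θ) * pd1 w1 (s, θ)) s :=
      ((hasDerivAt_pd1 hw s θ).const_mul 2).mul (hasDerivAt_pd1 hw1c s θ)
    show pd1 G2 (s, θ) = 2 * w1 (s, θ) ^ 2 + 2 * w (s, θ) * pd1 w1 (s, θ)
    rw [pd1_eq_deriv hG2 s θ, h1.deriv]
    ring
  -- continuity in θ at fixed s
  have hcth : ∀ (V : ℝ × ℝ → ℝ), ContDiff ℝ (⊤:ℕ∞) V → Continuous fun θ => V (s, θ) :=
    fun V hV => hV.continuous.comp (continuous_const.prodMk continuous_id)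
  -- periodicity
  have hup : Function.Periodic (u s) (2*π) := fun θ => hper s θ
  have hwp : Function.Periodic (fun θ => w (s, θ)) (2*π) := by
    have h : (fun θ => w (s, θ)) = deriv (u s) := funext fun θ => (ha s θ).symm
    rw [h]; exact periodic_deriv' hup
  have hw2p : Function.Periodic (fun θ => w2 (s, θ)) (2*π) := by
    have h : (fun θ => w2 (s, θ)) = deriv (deriv (u s)) := funext fun θ => (hb2 s θ).symm
    rw [h]; exact periodic_deriv' (periodic_deriv' hup)
  -- integration by parts
  have hibp1 : ∫ θ in (0:ℝ)..(2*π), w (s, θ) * w3 (s, θ)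
      = - ∫ θ in (0:ℝ)..(2*π), w2 (s, θ) ^ 2 := by
    rw [intervalIntegral.integral_mul_deriv_eq_deriv_mul
      (fun x _ => hasDerivAt_pd2 hw s x) (fun x _ => hasDerivAt_pd2 hw2c s x)
      ((hcth _ hw2c).intervalIntegrable 0 (2*π)) ((hcth _ hw3c).intervalIntegrable 0 (2*π))]
    have e1 : w (s, 2*π) = w (s, 0) := by simpa using hwp 0
    have e2 : w2 (s, 2*π) = w2 (s, 0) := by simpa using hw2p 0
    rw [e1, e2]
    have h3 : ∫ θ in (0:ℝ)..(2*π), w2 (s, θ) * w2 (s, θ)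
        = ∫ θ in (0:ℝ)..(2*π), w2 (s, θ) ^ 2 := by
      apply intervalIntegral.integral_congr; intro x _; beta_reduce; ring
    rw [h3]; ring
  have hibp2 : ∫ θ in (0:ℝ)..(2*π), u s θ * w2 (s, θ)
      = - ∫ θ in (0:ℝ)..(2*π), w (s, θ) ^ 2 := by
    rw [intervalIntegral.integral_mul_deriv_eq_deriv_mul
      (fun x _ => hasDerivAt_pd2 hU s x) (fun x _ => hasDerivAt_pd2 hw s x)
      ((hcth _ hw).intervalIntegrable 0 (2*π)) ((hcth _ hw2c).intervalIntegrable 0 (2*π))]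
    have e1 : U (s, 2*π) = U (s, 0) := by simp only [hUdef]; simpa using hup 0
    have e2 : w (s, 2*π) = w (s, 0) := by simpa using hwp 0
    rw [e1, e2]
    have h3 : ∫ θ in (0:ℝ)..(2*π), w (s, θ) * w (s, θ)
        = ∫ θ in (0:ℝ)..(2*π), w (s, θ) ^ 2 := by
      apply intervalIntegral.integral_congr; intro x _; beta_reduce; ring
    rw [h3]; ring
  -- Wirtinger
  have hwirt : ∫ θ in (0:ℝ)..(2*π), w (s, θ) ^ 2 ≤ ∫ θ in (0:ℝ)..(2*π), w2 (s, θ) ^ 2 := by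
    have hds : deriv (u s) = fun θ => w (s, θ) := funext fun θ => ha s θ
    have hfs : ContDiff ℝ (⊤:ℕ∞) (deriv (u s)) := by
      rw [hds]; exact hw.comp (contDiff_const.prodMk contDiff_id)
    have hmean : ∫ x in (0:ℝ)..(2*π), deriv (u s) x = 0 := by
      rw [intervalIntegral.integral_deriv_eq_sub
        (fun x _ => (hasDerivAt_pd2 hU s x).differentiableAt)
        (by rw [hds]; exact (hcth _ hw).intervalIntegrable 0 (2*π))]
      show u s (2*π) - u s 0 = 0
      simp only [sub_eq_zero]
      simpa using hup 0
    have h := wirtinger hfs (periodic_deriv' hup) hmean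
    have e1 : ∫ x in (0:ℝ)..(2*π), (deriv (u s) x) ^ 2 = ∫ θ in (0:ℝ)..(2*π), w (s, θ) ^ 2 := by
      apply intervalIntegral.integral_congr; intro x _; beta_reduce; rw [ha s x]
    have e2 : ∫ x in (0:ℝ)..(2*π), (deriv (deriv (u s)) x) ^ 2
        = ∫ θ in (0:ℝ)..(2*π), w2 (s, θ) ^ 2 := by
      apply intervalIntegral.integral_congr; intro x _; beta_reduce; rw [hb2 s x]
    rwa [e1, e2] at h
  -- abbreviations
  set A := ∫ θ in (0:ℝ)..(2*π), w1 (s, θ) ^ 2 with hA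
  set B := ∫ θ in (0:ℝ)..(2*π), w2 (s, θ) ^ 2 with hB
  set Cq := ∫ θ in (0:ℝ)..(2*π), w (s, θ) ^ 2 with hCq
  set D := ∫ θ in (0:ℝ)..(2*π), ρ s ^ 4 * (u s θ) ^ 2 with hD
  set P := ∫ θ in (0:ℝ)..(2*π), u s θ * w2 (s, θ) with hP
  have hA0 : 0 ≤ A := intervalIntegral.integral_nonneg (by positivity) (fun x _ => sq_nonneg _)
  -- compute the second derivative
  have hϑ3 : deriv (deriv (fun t => ∫ θ in (0:ℝ)..(2*π), (deriv (u t) θ) ^ 2)) s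
      = 2 * A - 2 * (lam * ρ s ^ 2) * Cq + 2 * B := by
    rw [hϑ2]
    have h1 : ∫ θ in (0:ℝ)..(2*π), (2 * w1 (s, θ) ^ 2 + 2 * w (s, θ) * pd1 w1 (s, θ))
        = ∫ θ in (0:ℝ)..(2*π),
          (2 * w1 (s, θ) ^ 2 - 2 * (lam * ρ s ^ 2) * w (s, θ) ^ 2 - 2 * (w (s, θ) * w3 (s, θ))) := by
      apply intervalIntegral.integral_congr
      intro θ _
      beta_reduce
      rw [hf θ]; ring
    rw [h1]
    have i1 : IntervalIntegrable (fun θ => w1 (s, θ) ^ 2) volume 0 (2*π) :=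
      ((hcth _ hw1c).pow 2).intervalIntegrable 0 (2*π)
    have i2 : IntervalIntegrable (fun θ => w (s, θ) ^ 2) volume 0 (2*π) :=
      ((hcth _ hw).pow 2).intervalIntegrable 0 (2*π)
    have i3 : IntervalIntegrable (fun θ => w (s, θ) * w3 (s, θ)) volume 0 (2*π) :=
      ((hcth _ hw).mul (hcth _ hw3c)).intervalIntegrable 0 (2*π)
    rw [intervalIntegral.integral_sub ((i1.const_mul 2).sub (i2.const_mul _)) (i3.const_mul 2),
      intervalIntegral.integral_sub (i1.const_mul 2) (i2.const_mul _),
      intervalIntegral.integral_const_mul, intervalIntegral.integral_const_mul,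
      intervalIntegral.integral_const_mul, hibp1]
    ring
  -- pointwise AM-GM bound, integrated
  have hbound : -(lam ^ 2 * D) - B ≤ 2 * (lam * ρ s ^ 2) * P := by
    have hmono : ∫ θ in (0:ℝ)..(2*π), (-(lam ^ 2 * (ρ s ^ 4 * (u s θ) ^ 2)) - w2 (s, θ) ^ 2)
        ≤ ∫ θ in (0:ℝ)..(2*π), 2 * (lam * ρ s ^ 2) * (u s θ * w2 (s, θ)) := by
      apply intervalIntegral.integral_mono_on (by positivity)
      · have hcu : Continuous (u s) := hcth _ hU
        exact ((continuous_const.mul (continuous_const.mul (hcu.pow 2))).neg.sub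
          ((hcth _ hw2c).pow 2)).intervalIntegrable 0 (2*π)
      · have hcu : Continuous (u s) := hcth _ hU
        exact (continuous_const.mul (hcu.mul (hcth _ hw2c))).intervalIntegrable 0 (2*π)
      · intro x _
        nlinarith [sq_nonneg (lam * ρ s ^ 2 * u s x + w2 (s, x))]
    have hcu : Continuous (u s) := hcth _ hU
    have i4 : IntervalIntegrable (fun θ => -(lam ^ 2 * (ρ s ^ 4 * (u s θ) ^ 2))) volume 0 (2*π) :=
      ((continuous_const.mul (continuous_const.mul (hcu.pow 2))).neg).intervalIntegrable 0 (2*π)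
    have i5 : IntervalIntegrable (fun θ => w2 (s, θ) ^ 2) volume 0 (2*π) :=
      ((hcth _ hw2c).pow 2).intervalIntegrable 0 (2*π)
    rw [intervalIntegral.integral_sub i4 i5, intervalIntegral.integral_neg] at hmono
    have eL : ∫ θ in (0:ℝ)..(2*π), lam ^ 2 * (ρ s ^ 4 * (u s θ) ^ 2) = lam ^ 2 * D :=
      intervalIntegral.integral_const_mul _ _
    have eR : ∫ θ in (0:ℝ)..(2*π), 2 * (lam * ρ s ^ 2) * (u s θ * w2 (s, θ))
        = 2 * (lam * ρ s ^ 2) * P := intervalIntegral.integral_const_mul _ _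
    rw [eL, eR] at hmono
    exact hmono
  have hCP : Cq = -P := by rw [hibp2, neg_neg]
  -- final assembly
  have egoal1 : ∫ θ in (0:ℝ)..(2*π), (deriv (u s) θ) ^ 2 = Cq := by
    rw [hCq]
    apply intervalIntegral.integral_congr; intro x _; beta_reduce; rw [ha s x]
  rw [hϑ3, egoal1]
  have h9 : -(2 * (lam * ρ s ^ 2) * Cq) = 2 * (lam * ρ s ^ 2) * P := by rw [hCP]; ring
  linarith [hwirt, hbound, hA0, h9]
end

section
/- For a hyperbolic right-angled geodesic hexagon with alternating sides of lengths a, b, c and L(Γ_c) the length of the side opposite the side of length c, one has cosh(L(Γ_c)) = (cosh c + cosh a · cosh b)/(sinh a · sinh b). Consequently, regarding L(Γ_c) as a function of c with a, b fixed, |d L(Γ_c)/dc| ≤ C(L̄) · sinh(c) for all a, b, c ∈ (0, L̄/2], where C(L̄) depends only on the upper bound L̄. -/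
open Real

/-!
With `K = cosh a cosh b` and `s = sinh a sinh b`, `hexSide a b c = arcosh ((cosh c + K) / s)`,
whose derivative in `c` is `sinh c / √((cosh c + K)² - s²)`. The radicand factors as
`(cosh c + cosh (a - b)) (cosh c + cosh (a + b)) ≥ 4`, so one can take `C = 1`.
-/

/-- Inverse hyperbolic cosine. -/
noncomputable def arcosh (x : ℝ) : ℝ := Real.log (x + Real.sqrt (x ^ 2 - 1))

/-- The length `L(Γ_c)` of the side of a right-angled hyperbolic hexagon opposite the side of
length `c`, with alternating side lengths `a, b, c`, determined by the hexagon formula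
`cosh L(Γ_c) = (cosh c + cosh a cosh b)/(sinh a sinh b)`. -/
noncomputable def hexSide (a b c : ℝ) : ℝ :=
  _root_.arcosh ((Real.cosh c + Real.cosh a * Real.cosh b) / (Real.sinh a * Real.sinh b))

theorem hexSide_eq_arcosh (a b c : ℝ) :
    hexSide a b c = Real.arcosh ((cosh c + cosh a * cosh b) / (sinh a * sinh b)) := rfl

theorem sinh_mul_sinh_add_one_le_cosh_mul_cosh (a b : ℝ) :
    sinh a * sinh b + 1 ≤ cosh a * cosh b := by
  linarith [cosh_sub a b, one_le_cosh (a - b)]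

theorem one_lt_hexagon_ratio {a b : ℝ} (ha : 0 < a) (hb : 0 < b) (c : ℝ) :
    1 < (cosh c + cosh a * cosh b) / (sinh a * sinh b) := by
  rw [one_lt_div (by positivity)]
  linarith [sinh_mul_sinh_add_one_le_cosh_mul_cosh a b, one_le_cosh c]

theorem cosh_hexSide {a b : ℝ} (ha : 0 < a) (hb : 0 < b) (c : ℝ) :
    cosh (hexSide a b c) = (cosh c + cosh a * cosh b) / (sinh a * sinh b) := by
  rw [hexSide_eq_arcosh]
  exact Real.cosh_arcosh (one_lt_hexagon_ratio ha hb c).le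

theorem one_le_sq_cosh_add_cosh_mul_cosh_sub_sq_sinh_mul_sinh (a b c : ℝ) :
    1 ≤ (cosh c + cosh a * cosh b) ^ 2 - (sinh a * sinh b) ^ 2 := by
  have hfactor : (cosh c + cosh a * cosh b) ^ 2 - (sinh a * sinh b) ^ 2
      = (cosh c + cosh (a - b)) * (cosh c + cosh (a + b)) := by
    rw [cosh_sub, cosh_add]; ring
  rw [hfactor]
  nlinarith [one_le_cosh c, one_le_cosh (a - b), one_le_cosh (a + b)]

theorem hasDerivAt_hexSide {a b : ℝ} (ha : 0 < a) (hb : 0 < b) (c : ℝ) :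
    HasDerivAt (hexSide a b)
      (sinh c / √((cosh c + cosh a * cosh b) ^ 2 - (sinh a * sinh b) ^ 2)) c := by
  have hs : 0 < sinh a * sinh b := mul_pos (sinh_pos_iff.mpr ha) (sinh_pos_iff.mpr hb)
  have hratio : HasDerivAt (fun y => (cosh y + cosh a * cosh b) / (sinh a * sinh b))
      (sinh c / (sinh a * sinh b)) c :=
    ((hasDerivAt_cosh c).add_const _).div_const _
  have hsq : ((cosh c + cosh a * cosh b) / (sinh a * sinh b)) ^ 2 - 1
      = ((cosh c + cosh a * cosh b) ^ 2 - (sinh a * sinh b) ^ 2) / (sinh a * sinh b) ^ 2 := by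
    field_simp
  rw [funext (hexSide_eq_arcosh a b)]
  refine ((hasDerivAt_arcosh (one_lt_hexagon_ratio ha hb c)).comp c hratio).congr_deriv ?_
  rw [hsq, sqrt_div' _ (sq_nonneg _), sqrt_sq hs.le]
  field_simp

theorem abs_deriv_hexSide_le {a b c : ℝ} (ha : 0 < a) (hb : 0 < b) (hc : 0 ≤ c) :
    |deriv (hexSide a b) c| ≤ sinh c := by
  have hsinh : 0 ≤ sinh c := sinh_nonneg_iff.mpr hc
  have hN := one_le_sq_cosh_add_cosh_mul_cosh_sub_sq_sinh_mul_sinh a b c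
  rw [(hasDerivAt_hexSide ha hb c).deriv, abs_of_nonneg (div_nonneg hsinh (sqrt_nonneg _))]
  exact div_le_self hsinh (one_le_sqrt.mpr hN)

theorem hexagon_side_formula_and_derivative_bound_general (Lbar : ℝ) :
    ∃ C : ℝ, 0 < C ∧ ∀ a b c : ℝ,
      0 < a → a ≤ Lbar / 2 → 0 < b → b ≤ Lbar / 2 → 0 < c → c ≤ Lbar / 2 →
      Real.cosh (hexSide a b c)
          = (Real.cosh c + Real.cosh a * Real.cosh b) / (Real.sinh a * Real.sinh b) ∧
      |deriv (hexSide a b) c| ≤ C * Real.sinh c := by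
  refine ⟨1, one_pos, fun a b c ha _ hb _ hc _ => ⟨cosh_hexSide ha hb c, ?_⟩⟩
  rw [one_mul]
  exact abs_deriv_hexSide_le ha hb hc.le

/-- For a hyperbolic right-angled geodesic hexagon with alternating sides of lengths `a, b, c`,
the side `L(Γ_c)` opposite the side of length `c` satisfies
`cosh(L(Γ_c)) = (cosh c + cosh a cosh b)/(sinh a sinh b)`; moreover, regarding `L(Γ_c)` as a
function of `c` with `a, b` fixed, there is a constant `C = C(L̄)` with
`|d L(Γ_c)/dc| ≤ C sinh c` for all `a, b, c ∈ (0, L̄/2]`. -/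
theorem hexagon_side_formula_and_derivative_bound (Lbar : ℝ) (hL : 0 < Lbar) :
    ∃ C : ℝ, 0 < C ∧ ∀ a b c : ℝ,
      0 < a → a ≤ Lbar / 2 → 0 < b → b ≤ Lbar / 2 → 0 < c → c ≤ Lbar / 2 →
      Real.cosh (hexSide a b c)
          = (Real.cosh c + Real.cosh a * Real.cosh b) / (Real.sinh a * Real.sinh b) ∧
      |deriv (hexSide a b) c| ≤ C * Real.sinh c :=
  hexagon_side_formula_and_derivative_bound_general Lbar
end

section
/- Let ℓ ∈ (0, 2 arsinh(1)] and let C_δ = {(s,θ) : |s| ≤ X_δ(ℓ)} be the δ-thin part of the collar around a geodesic of length ℓ, where X_δ(ℓ) = (2π/ℓ)(π/2 − arcsin(sinh(ℓ/2)/sinh δ)) for δ ≥ ℓ/2 (and X_δ = 0 otherwise). Then there exists a universal constant C such that Area(C_δ) = ∫_{−X_δ(ℓ)}^{X_δ(ℓ)} ∫_{S¹} ρ_ℓ(s)² dθ ds ≤ C δ for all δ ∈ (0, arsinh(1)). -/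
open Real

/-- Half-length of the `δ`-thin part of the collar in collar coordinates:
`X_δ(ℓ) = (2π/ℓ)(π/2 − arcsin(sinh(ℓ/2)/sinh δ))` for `δ ≥ ℓ/2`, and `0` otherwise. -/
noncomputable def Xdel (δ ℓ : ℝ) : ℝ :=
  if ℓ / 2 ≤ δ then (2 * π / ℓ) * (π / 2 - Real.arcsin (Real.sinh (ℓ / 2) / Real.sinh δ))
  else 0

lemma sinh_le_mul_exp (x : ℝ) (hx : 0 ≤ x) : Real.sinh x ≤ x * Real.exp x := by
  have h1 : 1 + -(2 * x) ≤ Real.exp (-(2 * x)) := by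
    linarith [Real.add_one_le_exp (-(2 * x))]
  have h2 : Real.exp (-(2 * x)) = Real.exp (-x) * Real.exp (-x) := by
    rw [← Real.exp_add]; ring_nf
  have h3 : Real.exp x * Real.exp (-x) = 1 := by rw [← Real.exp_add]; simp
  have hA : 0 < Real.exp x := Real.exp_pos x
  have hB : 0 < Real.exp (-x) := Real.exp_pos _
  rw [Real.sinh_eq]
  nlinarith [mul_pos hA hB]

lemma arsinh_one_le_one : Real.arsinh 1 ≤ 1 := by
  have h2 : Real.sqrt 2 ≤ 1.5 := by
    nlinarith [Real.sq_sqrt (show (0:ℝ) ≤ 2 by norm_num), Real.sqrt_nonneg 2]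
  have he : (2.7182818283 : ℝ) < Real.exp 1 := Real.exp_one_gt_d9
  have harv : Real.arsinh 1 = Real.log (1 + Real.sqrt 2) := by
    rw [Real.arsinh]; norm_num
  rw [harv, Real.log_le_iff_le_exp (by positivity)]
  nlinarith

lemma aux_deriv_eq (ℓ c : ℝ) (hc : c ≠ 0) :
    2 * π * (ℓ / (2 * π)) * (1 / c ^ 2 * (ℓ / (2 * π))) = 2 * π * (ℓ / (2 * π * c)) ^ 2 := by
  have hπ' : π ≠ 0 := Real.pi_ne_zero
  field_simp

set_option maxHeartbeats 1000000 in
/-- There is a universal constant `C` such that for every `ℓ ∈ (0, 2 arsinh 1]` and every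
`δ ∈ (0, arsinh 1)`, the area of the `δ`-thin part `(−X_δ(ℓ), X_δ(ℓ)) × S¹` of the collar,
`∫_{−X_δ(ℓ)}^{X_δ(ℓ)} ∫_{S¹} ρ_ℓ(s)² dθ ds`, is at most `C δ`. -/
theorem thin_part_area_bound :
    ∃ C : ℝ, 0 < C ∧ ∀ ℓ δ : ℝ, 0 < ℓ → ℓ ≤ 2 * Real.arsinh 1 →
      0 < δ → δ < Real.arsinh 1 →
      (∫ s in (-(Xdel δ ℓ))..(Xdel δ ℓ), ∫ _θ in (0:ℝ)..(2 * π), (rho ℓ s) ^ 2)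
        ≤ C * δ := by
  refine ⟨12, by norm_num, fun ℓ δ hℓ hℓ2 hδ hδ1 => ?_⟩
  have hπ := Real.pi_pos
  have hπ' : π ≠ 0 := ne_of_gt hπ
  by_cases h : ℓ / 2 ≤ δ
  · -- main case
    have hsδ : 0 < Real.sinh δ := Real.sinh_pos_iff.mpr hδ
    have hslp : ℓ / 2 < Real.sinh (ℓ / 2) := Real.self_lt_sinh_iff.mpr (by linarith)
    have hsl : 0 < Real.sinh (ℓ / 2) := by linarith
    set u : ℝ := Real.sinh (ℓ / 2) / Real.sinh δ with hu
    have hu0 : 0 < u := div_pos hsl hsδ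
    have hu1 : u ≤ 1 := (div_le_one hsδ).mpr (Real.sinh_le_sinh.mpr h)
    have hub : u * Real.sinh δ = Real.sinh (ℓ / 2) := by
      rw [hu]; field_simp
    clear_value u
    have harc0 : 0 < Real.arcsin u := Real.arcsin_pos.mpr hu0
    have harc2 : Real.arcsin u ≤ π / 2 := Real.arcsin_le_pi_div_two u
    set X : ℝ := Xdel δ ℓ with hXdef
    have hX : X = (2 * π / ℓ) * (π / 2 - Real.arcsin u) := by
      rw [hXdef, Xdel, if_pos h, hu]
    clear_value X
    clear hu hXdef
    have hX0 : 0 ≤ X := by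
      rw [hX]; apply mul_nonneg (by positivity); linarith
    have haX : ℓ / (2 * π) * X = π / 2 - Real.arcsin u := by
      rw [hX]; field_simp
    have hcos : ∀ s ∈ Set.uIcc (-X) X, 0 < Real.cos (ℓ * s / (2 * π)) := by
      intro s hs
      rw [Set.uIcc_of_le (by linarith)] at hs
      apply Real.cos_pos_of_mem_Ioo
      constructor
      · have h1 : ℓ / (2 * π) * (-X) ≤ ℓ * s / (2 * π) := by
          rw [show ℓ * s / (2 * π) = ℓ / (2 * π) * s by ring]
          exact mul_le_mul_of_nonneg_left hs.1 (by positivity)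
        have h2 : ℓ / (2 * π) * (-X) = -(π / 2 - Real.arcsin u) := by
          rw [mul_neg, haX]
        nlinarith
      · have h1 : ℓ * s / (2 * π) ≤ ℓ / (2 * π) * X := by
          rw [show ℓ * s / (2 * π) = ℓ / (2 * π) * s by ring]
          exact mul_le_mul_of_nonneg_left hs.2 (by positivity)
        nlinarith
    -- inner integral
    simp only [intervalIntegral.integral_const, smul_eq_mul, sub_zero]
    -- FTC for the outer integral
    have hderiv : ∀ s ∈ Set.uIcc (-X) X,
        HasDerivAt (fun t => 2 * π * (ℓ / (2 * π)) * Real.tan (ℓ / (2 * π) * t))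
          (2 * π * (rho ℓ s) ^ 2) s := by
      intro s hs
      have hc0 : 0 < Real.cos (ℓ / (2 * π) * s) := by
        rw [show ℓ / (2 * π) * s = ℓ * s / (2 * π) by ring]
        exact hcos s hs
      have hc : Real.cos (ℓ / (2 * π) * s) ≠ 0 := ne_of_gt hc0
      have h1 : HasDerivAt (fun t : ℝ => ℓ / (2 * π) * t) (ℓ / (2 * π)) s := by
        simpa using (hasDerivAt_id s).const_mul (ℓ / (2 * π))
      have h2 := (Real.hasDerivAt_tan hc).comp s h1
      have h3 := h2.const_mul (2 * π * (ℓ / (2 * π)))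
      have heq : 2 * π * (ℓ / (2 * π)) * (1 / Real.cos (ℓ / (2 * π) * s) ^ 2 * (ℓ / (2 * π)))
          = 2 * π * (rho ℓ s) ^ 2 := by
        rw [rho, show ℓ * s / (2 * π) = ℓ / (2 * π) * s by ring]
        exact aux_deriv_eq ℓ _ hc
      rw [← heq]
      exact h3
    have hcont : IntervalIntegrable (fun s => 2 * π * (rho ℓ s) ^ 2)
        MeasureTheory.volume (-X) X := by
      apply ContinuousOn.intervalIntegrable
      apply ContinuousOn.mul continuousOn_const
      apply ContinuousOn.pow
      unfold rho
      apply ContinuousOn.div continuousOn_const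
      · exact (continuous_const.mul
          (Real.continuous_cos.comp ((continuous_mul_left ℓ).div_const (2 * π)))).continuousOn
      · intro s hs
        exact ne_of_gt (mul_pos (by positivity) (hcos s hs))
    rw [intervalIntegral.integral_eq_sub_of_hasDerivAt hderiv hcont]
    have htan : Real.tan (ℓ / (2 * π) * X) = Real.sqrt (1 - u ^ 2) / u := by
      rw [haX, Real.tan_pi_div_two_sub, Real.tan_arcsin, inv_div]
    have hval : 2 * π * (ℓ / (2 * π)) * Real.tan (ℓ / (2 * π) * X) -
        2 * π * (ℓ / (2 * π)) * Real.tan (ℓ / (2 * π) * (-X)) =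
        2 * ℓ * (Real.sqrt (1 - u ^ 2) / u) := by
      rw [show ℓ / (2 * π) * (-X) = -(ℓ / (2 * π) * X) by ring, Real.tan_neg, htan]
      field_simp
      ring
    rw [hval]
    -- now bound
    have hsqrt : Real.sqrt (1 - u ^ 2) ≤ 1 := by
      exact Real.sqrt_le_one.mpr (by nlinarith)
    have hb1 : 2 * ℓ * (Real.sqrt (1 - u ^ 2) / u) ≤ 2 * ℓ * (1 / u) := by
      gcongr
    have hb2 : 2 * ℓ * (1 / u) ≤ 4 * Real.sinh δ := by
      rw [mul_one_div, div_le_iff₀ hu0]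
      nlinarith
    have hδ1' : δ ≤ 1 := le_trans hδ1.le arsinh_one_le_one
    have hb4 : Real.sinh δ ≤ 3 * δ := by
      have h5 := sinh_le_mul_exp δ hδ.le
      have hee : Real.exp δ ≤ Real.exp 1 := Real.exp_le_exp.mpr hδ1'
      have he3 : Real.exp 1 < 3 := by
        have := Real.exp_one_lt_d9; linarith
      nlinarith
    linarith
  · -- degenerate case
    rw [show Xdel δ ℓ = 0 from if_neg h, neg_zero, intervalIntegral.integral_same]
    nlinarith
end
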